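/- Suppose w ∈ E_n, i.e. w is an even chessboard element whose parabolic factorisation w = w^{[n−1]} w_{[n−1]} (ascending part times S_n-part) has both factors even chessboard elements. Then L(w) = L(w^{[n−1]}) + L(w_{[n−1]}). -/

import Mathlib

/-!
Folding the pairs of `Lset n w` by the involution `(i, j) ↦ (-j, -i)` writes `L(w)` as the
number of opposite-parity inversions `0 < i < j`, plus the opposite-parity pairs `0 < i < j`
with `w i + w j < 0`, plus the odd `i > 0` with `w i < 0`. For `w = u ∘ v` the first count is
that of `v`, because `u` is increasing on positive entries, and the other two are those of `u`,
because `v` permutes `{1, …, n}` preserving parity. The counts that are left vanish: `u` has no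
inversions among positive positions and `v` has no negative entries.
-/

open Finset Polynomial

def IsSigned (n : ℕ) (w : ℤ → ℤ) : Prop :=
  (∀ j : ℤ, w (-j) = -w j) ∧
    Set.BijOn w (Set.Icc (-(n : ℤ)) n) (Set.Icc (-(n : ℤ)) n)

noncomputable def Lset (n : ℕ) (w : ℤ → ℤ) : Finset (ℤ × ℤ) :=
  (Finset.Icc (-(n : ℤ)) n ×ˢ Finset.Icc (-(n : ℤ)) n).filter
    fun p => p.1 < p.2 ∧ w p.2 < w p.1 ∧ p.1 % 2 ≠ p.2 % 2

noncomputable def Lstat (n : ℕ) (w : ℤ → ℤ) : ℕ := (Lset n w).card / 2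

noncomputable def invStat (n : ℕ) (w : ℤ → ℤ) : ℕ :=
  ((Finset.Icc (1 : ℤ) n ×ˢ Finset.Icc (1 : ℤ) n).filter
    fun p => p.1 < p.2 ∧ w p.2 < w p.1).card

noncomputable def negStat (n : ℕ) (w : ℤ → ℤ) : ℕ :=
  ((Finset.Icc (1 : ℤ) n).filter fun i => w i < 0).card

noncomputable def nspStat (n : ℕ) (w : ℤ → ℤ) : ℕ :=
  ((Finset.Icc (1 : ℤ) n ×ˢ Finset.Icc (1 : ℤ) n).filter
    fun p => p.1 < p.2 ∧ w p.1 + w p.2 < 0).card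

noncomputable def lenStat (n : ℕ) (w : ℤ → ℤ) : ℕ := invStat n w + negStat n w + nspStat n w

noncomputable def Dset (n : ℕ) (w : ℤ → ℤ) : Finset ℤ :=
  (Finset.Ico (0 : ℤ) n).filter fun i => w (i + 1) < w i

abbrev HypOct (n : ℕ) := Equiv.Perm (Fin n) × (Fin n → Bool)

def HypOct.fn {n : ℕ} (w : HypOct n) : ℤ → ℤ := fun j =>
  if h : 1 ≤ j ∧ j ≤ (n : ℤ) then
    (if w.2 ⟨(j - 1).toNat, by omega⟩ then -1 else 1) *
      (((w.1 ⟨(j - 1).toNat, by omega⟩ : Fin n) : ℤ) + 1)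
  else if h' : 1 ≤ -j ∧ -j ≤ (n : ℤ) then
    -((if w.2 ⟨(-j - 1).toNat, by omega⟩ then -1 else 1) *
      (((w.1 ⟨(-j - 1).toNat, by omega⟩ : Fin n) : ℤ) + 1))
  else 0

section Counting

variable {α : Type*} {s : Finset α} {σ : α → α}

theorem Finset.card_filter_comp_of_bijOn (h : Set.BijOn σ s s) (P : α → Prop)
    [DecidablePred P] : #{a ∈ s | P (σ a)} = #{a ∈ s | P a} := by
  refine Set.BijOn.finsetCard_eq σ ⟨fun a ha => ?_, h.injOn.mono fun a ha => ?_, fun b hb => ?_⟩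
  · rw [coe_filter] at ha ⊢
    exact ⟨h.mapsTo ha.1, ha.2⟩
  · rw [coe_filter] at ha
    exact ha.1
  · rw [coe_filter] at hb
    obtain ⟨a, ha, rfl⟩ := h.surjOn hb.1
    exact ⟨a, by simpa using ⟨ha, hb.2⟩, rfl⟩

theorem Finset.card_filter_prodMap_of_bijOn (h : Set.BijOn σ s s) (r : α → α → Prop)
    [DecidableRel r] : #{p ∈ s ×ˢ s | r (σ p.1) (σ p.2)} = #{p ∈ s ×ˢ s | r p.1 p.2} :=
  card_filter_comp_of_bijOn (σ := Prod.map σ σ) (by rw [coe_product]; exact h.prodMap h)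
    fun p => r p.1 p.2

theorem Finset.two_mul_card_filter_lt_of_symm [LinearOrder α] {r : α → α → Prop}
    [DecidableRel r] (hsymm : ∀ a b, r a b → r b a) (hirrefl : ∀ a, ¬r a a) :
    2 * #{p ∈ s ×ˢ s | p.1 < p.2 ∧ r p.1 p.2} = #{p ∈ s ×ˢ s | r p.1 p.2} := by
  have hswap :
      #{p ∈ s ×ˢ s | r p.1 p.2 ∧ ¬p.1 < p.2} = #{p ∈ s ×ˢ s | r p.1 p.2 ∧ p.1 < p.2} := by
    refine card_nbij' Prod.swap Prod.swap (fun p hp => ?_) (fun p hp => ?_)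
      (fun p _ => rfl) (fun p _ => rfl)
    · simp only [coe_filter, Set.mem_ofPred_eq, mem_product] at hp ⊢
      have hne : p.1 ≠ p.2 := fun h => hirrefl p.1 (by simpa [← h] using hp.2.1)
      exact ⟨hp.1.symm, hsymm _ _ hp.2.1, lt_of_le_of_ne (not_lt.1 hp.2.2) hne.symm⟩
    · simp only [coe_filter, Set.mem_ofPred_eq, mem_product] at hp ⊢
      exact ⟨hp.1.symm, hsymm _ _ hp.2.1, hp.2.2.asymm⟩
  rw [← card_filter_add_card_filter_not (s := {p ∈ s ×ˢ s | r p.1 p.2}) (fun p => p.1 < p.2),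
    filter_filter, filter_filter, hswap]
  simp only [and_comm]
  ring

end Counting

noncomputable def oppParityInvSet (n : ℕ) (w : ℤ → ℤ) : Finset (ℤ × ℤ) :=
  {p ∈ Icc (1 : ℤ) n ×ˢ Icc (1 : ℤ) n | p.1 < p.2 ∧ w p.2 < w p.1 ∧ p.1 % 2 ≠ p.2 % 2}

noncomputable def oppParityNegSumSet (n : ℕ) (w : ℤ → ℤ) : Finset (ℤ × ℤ) :=
  {p ∈ Icc (1 : ℤ) n ×ˢ Icc (1 : ℤ) n | p.1 < p.2 ∧ w p.1 + w p.2 < 0 ∧ p.1 % 2 ≠ p.2 % 2}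

noncomputable def oddNegSet (n : ℕ) (w : ℤ → ℤ) : Finset ℤ :=
  {i ∈ Icc (1 : ℤ) n | w i < 0 ∧ i % 2 = 1}

section Decomposition

variable {n : ℕ} {w : ℤ → ℤ}

theorem mem_Lset {p : ℤ × ℤ} : p ∈ Lset n w ↔ -(n : ℤ) ≤ p.1 ∧ p.1 ≤ n ∧ -(n : ℤ) ≤ p.2 ∧
    p.2 ≤ n ∧ p.1 < p.2 ∧ w p.2 < w p.1 ∧ p.1 % 2 ≠ p.2 % 2 := by
  simp only [Lset, mem_filter, mem_product, mem_Icc, and_assoc]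

/-- The involution `(i, j) ↦ (-j, -i)` of `Lset` has no fixed points, since `-i` and `i` have
the same parity. -/
theorem card_Lset_eq_two_mul (hodd : ∀ j, w (-j) = -w j) :
    #(Lset n w) = 2 * #{p ∈ Lset n w | 0 < p.1 + p.2} := by
  rw [← card_filter_add_card_filter_not (s := Lset n w) (fun p => 0 < p.1 + p.2), two_mul,
    add_right_inj]
  refine card_nbij' (fun p => (-p.2, -p.1)) (fun p => (-p.2, -p.1)) (fun p hp => ?_)
    (fun p hp => ?_) (fun p _ => by simp) (fun p _ => by simp) <;>
  · simp only [coe_filter, Set.mem_ofPred_eq, mem_Lset] at hp ⊢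
    have := hodd p.1
    have := hodd p.2
    omega

theorem card_Lset_filter_pos_sum (hodd : ∀ j, w (-j) = -w j) :
    #{p ∈ Lset n w | 0 < p.1 + p.2} =
      #(oppParityInvSet n w) + #(oppParityNegSumSet n w) + #(oddNegSet n w) := by
  set P := {p ∈ Lset n w | 0 < p.1 + p.2}
  have hInv : {p ∈ P | 0 < p.1} = oppParityInvSet n w := by
    ext p
    simp only [P, oppParityInvSet, mem_filter, mem_Lset, mem_product, mem_Icc]
    omega
  have hNegSum : #{p ∈ P | ¬0 < p.1 ∧ ¬p.1 = 0} = #(oppParityNegSumSet n w) := by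
    refine card_nbij' (fun p => (-p.1, p.2)) (fun p => (-p.1, p.2)) (fun p hp => ?_)
      (fun p hp => ?_) (fun p _ => by simp) (fun p _ => by simp) <;>
    · simp only [P, oppParityNegSumSet, coe_filter, Set.mem_ofPred_eq, mem_filter, mem_Lset,
        mem_product, mem_Icc] at hp ⊢
      have := hodd p.1
      omega
  have hOddNeg : #{p ∈ P | ¬0 < p.1 ∧ p.1 = 0} = #(oddNegSet n w) := by
    have hw0 : w 0 = 0 := by
      have h := hodd 0
      rw [neg_zero] at h
      omega
    refine card_nbij' (·.2) (fun i => (0, i)) (fun p hp => ?_) (fun i hi => ?_)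
      (fun p hp => ?_) (fun i _ => rfl)
    · simp only [P, coe_filter, Set.mem_ofPred_eq, mem_filter] at hp
      obtain ⟨⟨hL, -⟩, -, h0⟩ := hp
      rw [mem_Lset, h0, hw0] at hL
      simp only [oddNegSet, coe_filter, Set.mem_ofPred_eq, mem_Icc]
      omega
    · simp only [P, oddNegSet, coe_filter, Set.mem_ofPred_eq, mem_filter, mem_Lset,
        mem_Icc, hw0, and_true] at hi ⊢
      omega
    · simp only [P, coe_filter, Set.mem_ofPred_eq, mem_filter] at hp
      exact Prod.ext hp.2.2.symm rfl
  rw [← card_filter_add_card_filter_not (s := P) (fun p => 0 < p.1), hInv,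
    ← card_filter_add_card_filter_not (s := {p ∈ P | ¬0 < p.1}) (fun p => p.1 = 0)]
  simp only [filter_filter]
  rw [hNegSum, hOddNeg]
  ring

theorem Lstat_eq_card_add_card_add_card (hodd : ∀ j, w (-j) = -w j) :
    Lstat n w = #(oppParityInvSet n w) + #(oppParityNegSumSet n w) + #(oddNegSet n w) := by
  rw [Lstat, card_Lset_eq_two_mul hodd, card_Lset_filter_pos_sum hodd,
    Nat.mul_div_cancel_left _ two_pos]

end Decomposition

section Factorisation

variable {n : ℕ} {u v : ℤ → ℤ}

theorem IsSigned.bijOn_Icc_one (hv : IsSigned n v) (hpos : ∀ j ∈ Icc (1 : ℤ) n, 0 < v j) :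
    Set.BijOn v (Set.Icc 1 n) (Set.Icc 1 n) := by
  refine ⟨fun j hj => ?_, hv.2.injOn.mono fun j hj => ?_, fun m hm => ?_⟩
  · have := hv.2.mapsTo (Set.mem_Icc.2 ⟨by linarith [hj.1], hj.2⟩)
    exact ⟨hpos j (mem_Icc.2 hj), this.2⟩
  · exact ⟨by linarith [hj.1], hj.2⟩
  · obtain ⟨j, hj, rfl⟩ := hv.2.surjOn (Set.mem_Icc.2 ⟨by linarith [hm.1], hm.2⟩)
    refine ⟨j, ⟨?_, hj.2⟩, rfl⟩
    by_contra! hj0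
    obtain hneg | rfl : j < 0 ∨ j = 0 := by omega
    · have hvneg : v (-j) = -v j := hv.1 j
      have := hpos (-j) (mem_Icc.2 ⟨by omega, by linarith [hj.1]⟩)
      linarith [hm.1]
    · have hv0 : v (-0) = -v 0 := hv.1 0
      rw [neg_zero] at hv0
      linarith [hm.1]

theorem oppParityInvSet_eq_empty_of_strictMonoOn (hu : StrictMonoOn u (Set.Icc 1 n)) :
    oppParityInvSet n u = ∅ := by
  refine filter_false_of_mem fun p hp => ?_
  rw [mem_product, mem_Icc, mem_Icc] at hp
  rintro ⟨hlt, hinv, -⟩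
  exact (hu hp.1 hp.2 hlt).asymm hinv

theorem oppParityNegSumSet_eq_empty_of_pos (hpos : ∀ j ∈ Icc (1 : ℤ) n, 0 < v j) :
    oppParityNegSumSet n v = ∅ := by
  refine filter_false_of_mem fun p hp => ?_
  rw [mem_product] at hp
  have := hpos _ hp.1
  have := hpos _ hp.2
  omega

theorem oddNegSet_eq_empty_of_pos (hpos : ∀ j ∈ Icc (1 : ℤ) n, 0 < v j) :
    oddNegSet n v = ∅ :=
  filter_false_of_mem fun j hj h => (hpos j hj).not_gt h.1

theorem oppParityInvSet_comp (hu : StrictMonoOn u (Set.Icc 1 n))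
    (hv : Set.MapsTo v (Set.Icc 1 n) (Set.Icc 1 n)) :
    oppParityInvSet n (u ∘ v) = oppParityInvSet n v := by
  refine filter_congr fun p hp => ?_
  rw [mem_product, mem_Icc, mem_Icc] at hp
  rw [Function.comp_apply, Function.comp_apply, hu.lt_iff_lt (hv hp.2) (hv hp.1)]

theorem card_oppParityNegSumSet_comp (hv : Set.BijOn v (Set.Icc 1 n) (Set.Icc 1 n))
    (hpar : ∀ j ∈ Set.Icc (1 : ℤ) n, v j % 2 = j % 2) :
    #(oppParityNegSumSet n (u ∘ v)) = #(oppParityNegSumSet n u) := by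
  set r : ℤ → ℤ → Prop := fun a b => u a + u b < 0 ∧ a % 2 ≠ b % 2
  have hsymm (a b : ℤ) (h : r a b) : r b a := ⟨by linarith [h.1], h.2.symm⟩
  have hv' : Set.BijOn v ↑(Icc (1 : ℤ) n) ↑(Icc (1 : ℤ) n) := by rwa [coe_Icc]
  rw [← Nat.mul_right_inj two_ne_zero]
  calc 2 * #(oppParityNegSumSet n (u ∘ v))
      = 2 * #{p ∈ Icc (1 : ℤ) n ×ˢ Icc (1 : ℤ) n | p.1 < p.2 ∧ r (v p.1) (v p.2)} := by
        refine congrArg (2 * #·) (filter_congr fun p hp => ?_)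
        rw [mem_product, mem_Icc, mem_Icc] at hp
        simp only [r, Function.comp_apply, hpar _ hp.1, hpar _ hp.2]
    _ = #{p ∈ Icc (1 : ℤ) n ×ˢ Icc (1 : ℤ) n | r (v p.1) (v p.2)} :=
        two_mul_card_filter_lt_of_symm (fun a b => hsymm (v a) (v b)) fun a h => h.2 rfl
    _ = #{p ∈ Icc (1 : ℤ) n ×ˢ Icc (1 : ℤ) n | r p.1 p.2} := card_filter_prodMap_of_bijOn hv' r
    _ = 2 * #(oppParityNegSumSet n u) :=
        (two_mul_card_filter_lt_of_symm hsymm fun a h => h.2 rfl).symm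

theorem card_oddNegSet_comp (hv : Set.BijOn v (Set.Icc 1 n) (Set.Icc 1 n))
    (hpar : ∀ j ∈ Set.Icc (1 : ℤ) n, v j % 2 = j % 2) :
    #(oddNegSet n (u ∘ v)) = #(oddNegSet n u) := by
  have hv' : Set.BijOn v ↑(Icc (1 : ℤ) n) ↑(Icc (1 : ℤ) n) := by rwa [coe_Icc]
  rw [oddNegSet, oddNegSet, ← card_filter_comp_of_bijOn hv' fun m => u m < 0 ∧ m % 2 = 1]
  congr 1
  refine filter_congr fun j hj => ?_
  rw [Function.comp_apply, hpar j (by simpa using hj)]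

end Factorisation

theorem L_additive_first_general (n : ℕ) (w u v : ℤ → ℤ)
    (hu : IsSigned n u) (hv : IsSigned n v)
    (hasc : ∀ i j : ℤ, 1 ≤ i → i < j → j ≤ (n : ℤ) → u i < u j)
    (hpos : ∀ j ∈ Finset.Icc (1 : ℤ) n, 0 < v j)
    (hfact : ∀ j : ℤ, w j = u (v j))
    (hve : ∀ j ∈ Finset.Icc (1 : ℤ) n, |v j| % 2 = j % 2) :
    Lstat n w = Lstat n u + Lstat n v := by
  obtain rfl : w = u ∘ v := funext hfact
  have hmono : StrictMonoOn u (Set.Icc 1 n) := fun i hi j hj hij => hasc i j hi.1 hij hj.2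
  have hbij := hv.bijOn_Icc_one hpos
  have hpar (j : ℤ) (hj : j ∈ Set.Icc (1 : ℤ) n) : v j % 2 = j % 2 := by
    rw [← coe_Icc, mem_coe] at hj
    simpa only [abs_of_pos (hpos j hj)] using hve j hj
  rw [Lstat_eq_card_add_card_add_card fun j => by simp only [Function.comp_apply, hv.1, hu.1],
    Lstat_eq_card_add_card_add_card hu.1, Lstat_eq_card_add_card_add_card hv.1,
    oppParityInvSet_comp hmono hbij.mapsTo, card_oppParityNegSumSet_comp hbij hpar,
    card_oddNegSet_comp hbij hpar, oppParityInvSet_eq_empty_of_strictMonoOn hmono,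
    oppParityNegSumSet_eq_empty_of_pos hpos, oddNegSet_eq_empty_of_pos hpos, card_empty,
    card_empty]
  ring

/-- First additivity result: if `w ∈ Eₙ`, i.e. both factors of the parabolic
factorisation `w = u·v` (`u` ascending, `v ∈ Sₙ`) are even chessboard
elements, then `L(w) = L(u) + L(v)`. -/
theorem L_additive_first (n : ℕ) (w u v : ℤ → ℤ)
    (hw : IsSigned n w) (hu : IsSigned n u) (hv : IsSigned n v)
    (hasc : ∀ i j : ℤ, 1 ≤ i → i < j → j ≤ (n : ℤ) → u i < u j)
    (hpos : ∀ j ∈ Finset.Icc (1 : ℤ) n, 0 < v j)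
    (hfact : ∀ j : ℤ, w j = u (v j))
    (hue : ∀ j ∈ Finset.Icc (1 : ℤ) n, |u j| % 2 = j % 2)
    (hve : ∀ j ∈ Finset.Icc (1 : ℤ) n, |v j| % 2 = j % 2) :
    Lstat n w = Lstat n u + Lstat n v :=
  L_additive_first_general n w u v hu hv hasc hpos hfact hve
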